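/- arXiv:1702.06414 — 3 statements merged into one kernel-verified Lean document; each statement's English description precedes it below -/
import Mathlib

section
/- Let B be a Boolean algebra. The completion ⟨𝒫(Uf(B)), φ_B⟩ is dense: for every subset A ⊆ Uf(B), A = ⋃ { ⋂_{a ∈ F} φ_B(a) : F a filter of B with ⋂_{a ∈ F} φ_B(a) ⊆ A } and A = ⋂ { ⋃_{a ∈ I} φ_B(a) : I an ideal of B with A ⊆ ⋃_{a ∈ I} φ_B(a) }. -/
/-- A (lattice) filter of a Boolean algebra: a nonempty, upward-closed subset
closed under binary meets. -/
def IsLatFilter {B : Type*} [BooleanAlgebra B] (F : Set B) : Prop :=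
  F.Nonempty ∧ (∀ a b : B, a ∈ F → a ≤ b → b ∈ F) ∧ (∀ a b : B, a ∈ F → b ∈ F → a ⊓ b ∈ F)

/-- A (lattice) ideal of a Boolean algebra: a nonempty, downward-closed subset
closed under binary joins. -/
def IsLatIdeal {B : Type*} [BooleanAlgebra B] (I : Set B) : Prop :=
  I.Nonempty ∧ (∀ a b : B, a ∈ I → b ≤ a → b ∈ I) ∧ (∀ a b : B, a ∈ I → b ∈ I → a ⊔ b ∈ I)

/-- An ultrafilter of a Boolean algebra: a maximal proper filter. -/
def IsUf {B : Type*} [BooleanAlgebra B] (F : Set B) : Prop :=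
  IsLatFilter F ∧ F ≠ Set.univ ∧
    ∀ G : Set B, IsLatFilter G → G ≠ Set.univ → F ⊆ G → F = G

/-- `Uf B` is the set (type) of ultrafilters of the Boolean algebra `B`. -/
def Uf (B : Type*) [BooleanAlgebra B] : Type _ := {F : Set B // IsUf F}

/-- The Stone map `φ_B : B → 𝒫(Uf B)`, `φ_B a = {u ∈ Uf B : a ∈ u}`. -/
def stoneMap (B : Type*) [BooleanAlgebra B] : B → Set (Uf B) := fun a => {u : Uf B | a ∈ u.1}

/-- The canonical extension of a map `h : B₁ → B₂`:
`h^σ(A) = ⋃ { ⋂_{a ∈ F} φ₂(h a) : F a filter of B₁ with ⋂_{a ∈ F} φ₁ a ⊆ A }`. -/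
def canExt {B₁ B₂ : Type*} [BooleanAlgebra B₁] [BooleanAlgebra B₂] (h : B₁ → B₂)
    (A : Set (Uf B₁)) : Set (Uf B₂) :=
  ⋃ F ∈ {F : Set B₁ | IsLatFilter F ∧ (⋂ a ∈ F, stoneMap B₁ a) ⊆ A},
    ⋂ a ∈ F, stoneMap B₂ (h a)

/-!
An ultrafilter `u` is the only ultrafilter containing `u`, so `⋂ a ∈ u, φ a = {u}` and the filter
`u` itself witnesses `u ∈ A` in the union. Dually, ultrafilters are prime, so the complement of
`u` is an ideal, and `⋃ a ∉ u, φ a` is everything but `u`; for `u ∉ A` this ideal excludes `u`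
from the intersection.
-/

section

variable {B : Type*} [BooleanAlgebra B]

lemma IsLatFilter.isLatFilter_setOf_inf_le {F : Set B} (hF : IsLatFilter F) (a : B) :
    IsLatFilter {c | ∃ x ∈ F, x ⊓ a ≤ c} := by
  obtain ⟨⟨x, hx⟩, -, hinf⟩ := hF
  refine ⟨⟨x, x, hx, inf_le_left⟩, ?_, ?_⟩
  · rintro c d ⟨x, hx, hxc⟩ hcd
    exact ⟨x, hx, hxc.trans hcd⟩
  · rintro c d ⟨x, hx, hxc⟩ ⟨y, hy, hyd⟩
    exact ⟨x ⊓ y, hinf _ _ hx hy,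
      le_inf ((inf_le_inf_right a inf_le_left).trans hxc)
        ((inf_le_inf_right a inf_le_right).trans hyd)⟩

namespace IsUf

variable {F : Set B}

lemma bot_notMem (hF : IsUf F) : (⊥ : B) ∉ F := fun hbot =>
  hF.2.1 (Set.eq_univ_of_forall fun c => hF.1.2.1 ⊥ c hbot bot_le)

lemma mem_or_compl_mem (hF : IsUf F) (a : B) : a ∈ F ∨ aᶜ ∈ F := by
  obtain ⟨hfil, -, hmax⟩ := hF
  -- `G` is the filter generated by `F ∪ {a}`; by maximality it is either `F` or improper.
  set G : Set B := {c | ∃ x ∈ F, x ⊓ a ≤ c}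
  have hFG : F ⊆ G := fun c hc => ⟨c, hc, inf_le_left⟩
  by_cases hG : G = Set.univ
  · obtain ⟨x, hx, hxa⟩ : (⊥ : B) ∈ G := hG ▸ Set.mem_univ _
    exact Or.inr (hfil.2.1 x aᶜ hx (le_compl_iff_disjoint_right.mpr (disjoint_iff_inf_le.mpr hxa)))
  · obtain ⟨x, hx⟩ := hfil.1
    exact Or.inl (hmax G (hfil.isLatFilter_setOf_inf_le a) hG hFG ▸ ⟨x, hx, inf_le_right⟩)

lemma mem_or_mem_of_sup_mem (hF : IsUf F) {a b : B} (hab : a ⊔ b ∈ F) : a ∈ F ∨ b ∈ F := by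
  refine (hF.mem_or_compl_mem a).imp_right fun hac => hF.1.2.1 _ _ (hF.1.2.2 _ _ hab hac) ?_
  rw [inf_sup_right, inf_compl_eq_bot, bot_sup_eq]
  exact inf_le_left

lemma isLatIdeal_compl (hF : IsUf F) : IsLatIdeal Fᶜ :=
  ⟨⟨⊥, hF.bot_notMem⟩, fun a b ha hba hb => ha (hF.1.2.1 b a hb hba),
    fun _ _ ha hb hab => (hF.mem_or_mem_of_sup_mem hab).elim ha hb⟩

end IsUf

namespace Uf

lemma eq_of_subset {u v : Uf B} (h : u.1 ⊆ v.1) : u = v :=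
  Subtype.ext (u.2.2.2 v.1 v.2.1 v.2.2.1 h)

lemma biInter_stoneMap_eq_singleton (u : Uf B) : ⋂ a ∈ u.1, stoneMap B a = {u} := by
  ext v
  simp only [Set.mem_iInter₂, Set.mem_singleton_iff]
  exact ⟨fun hv => (eq_of_subset hv).symm, fun huv _ ha => huv ▸ ha⟩

lemma biUnion_stoneMap_compl_eq (u : Uf B) : ⋃ a ∈ u.1ᶜ, stoneMap B a = {u}ᶜ := by
  ext v
  simp only [Set.mem_iUnion₂, Set.mem_compl_iff, Set.mem_singleton_iff]
  refine ⟨fun ⟨a, hau, hav⟩ huv => hau (huv ▸ hav), fun hvu => ?_⟩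
  obtain ⟨a, hav, hau⟩ := Set.not_subset.mp fun h => hvu (eq_of_subset h)
  exact ⟨a, hau, hav⟩

end Uf

end

/-- The completion `⟨𝒫(Uf B), φ_B⟩` is dense: every `A ⊆ Uf B` is the union
of the meets of filter images below it, and the intersection of the joins of ideal images
above it. -/
theorem stone_completion_dense (B : Type*) [BooleanAlgebra B] (A : Set (Uf B)) :
    A = (⋃ F ∈ {F : Set B | IsLatFilter F ∧ (⋂ a ∈ F, stoneMap B a) ⊆ A},
          ⋂ a ∈ F, stoneMap B a) ∧
    A = (⋂ I ∈ {I : Set B | IsLatIdeal I ∧ A ⊆ ⋃ a ∈ I, stoneMap B a},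
          ⋃ a ∈ I, stoneMap B a) := by
  constructor
  · refine (Set.iUnion₂_subset fun F hF => hF.2).antisymm' fun u hu => ?_
    have hsingleton : ⋂ a ∈ u.1, stoneMap B a = {u} := u.biInter_stoneMap_eq_singleton
    refine Set.mem_biUnion (x := u.1) ⟨u.2.1, hsingleton ▸ Set.singleton_subset_iff.mpr hu⟩ ?_
    exact hsingleton ▸ Set.mem_singleton u
  · refine (Set.subset_iInter₂ fun I hI => hI.2).antisymm fun u hu => ?_
    by_contra huA
    have hcover : A ⊆ ⋃ a ∈ u.1ᶜ, stoneMap B a := by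
      rw [u.biUnion_stoneMap_compl_eq]
      exact fun v hv hvu => huA (hvu ▸ hv)
    have hu' := Set.mem_iInter₂.mp hu _ ⟨u.2.isLatIdeal_compl, hcover⟩
    rw [u.biUnion_stoneMap_compl_eq] at hu'
    exact hu' rfl
end

section
/- Let B₁ and B₂ be Boolean algebras and h : B₁ → B₂ an order-preserving map. Then the canonical extension h^σ : 𝒫(Uf(B₁)) → 𝒫(Uf(B₂)) is order-preserving (monotone with respect to ⊆) and extends h, i.e. h^σ(φ₁(a)) = φ₂(h(a)) for every a ∈ B₁. -/
/-!
Monotonicity is immediate: enlarging `A` only enlarges the family over which the union defining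
`h^σ(A)` is taken. For `h^σ(φ₁ a) = φ₂(h a)`, the principal filter `↑a` is a witness for `⊇`
(this is where `h` being monotone enters). For `⊆`, the point is Stone's separation: a filter `F`
with `⋂_{b ∈ F} φ₁ b ⊆ φ₁ a` contains `a`, since otherwise the filter generated by `F` and `aᶜ`
is proper and, by Zorn's lemma, lies in an ultrafilter that belongs to every `φ₁ b`, `b ∈ F`,
but not to `φ₁ a`.
-/

section Filters

variable {B : Type*} [BooleanAlgebra B]

theorem IsLatFilter.ne_univ_iff {F : Set B} (hF : IsLatFilter F) : F ≠ Set.univ ↔ ⊥ ∉ F :=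
  ⟨fun hne hbot => hne (Set.eq_univ_of_forall fun x => hF.2.1 ⊥ x hbot bot_le),
    fun hbot hne => hbot (hne ▸ Set.mem_univ ⊥)⟩

theorem isLatFilter_Ici (a : B) : IsLatFilter (Set.Ici a) :=
  ⟨⟨a, le_rfl⟩, fun _ _ hx hxy => le_trans hx hxy, fun _ _ hx hy => le_inf hx hy⟩

theorem isLatFilter_sUnion_of_isChain {c : Set (Set B)} (hc : ∀ F ∈ c, IsLatFilter F)
    (hchain : IsChain (· ⊆ ·) c) (hne : c.Nonempty) : IsLatFilter (⋃₀ c) := by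
  obtain ⟨F₀, hF₀⟩ := hne
  refine ⟨?_, ?_, ?_⟩
  · obtain ⟨x, hx⟩ := (hc F₀ hF₀).1
    exact ⟨x, F₀, hF₀, hx⟩
  · rintro a b ⟨F, hF, haF⟩ hab
    exact ⟨F, hF, (hc F hF).2.1 a b haF hab⟩
  · rintro a b ⟨F, hF, haF⟩ ⟨F', hF', hbF'⟩
    rcases hchain.total hF hF' with hle | hle
    · exact ⟨F', hF', (hc F' hF').2.2 a b (hle haF) hbF'⟩
    · exact ⟨F, hF, (hc F hF).2.2 a b haF (hle hbF')⟩

theorem IsLatFilter.exists_isUf_superset {G : Set B} (hG : IsLatFilter G) (hGp : ⊥ ∉ G) :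
    ∃ u : Set B, IsUf u ∧ G ⊆ u := by
  let S : Set (Set B) := {F | IsLatFilter F ∧ ⊥ ∉ F}
  have hchain : ∀ c ⊆ S, IsChain (· ⊆ ·) c → c.Nonempty → ∃ ub ∈ S, ∀ s ∈ c, s ⊆ ub :=
    fun c hcS hchain hne =>
      ⟨⋃₀ c, ⟨isLatFilter_sUnion_of_isChain (fun F hF => (hcS hF).1) hchain hne,
        fun ⟨F, hF, hbot⟩ => (hcS hF).2 hbot⟩, fun _ => Set.subset_sUnion_of_mem⟩
  obtain ⟨M, hGM, ⟨hM, hMp⟩, hmax⟩ := zorn_subset_nonempty S hchain G ⟨hG, hGp⟩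
  refine ⟨M, ⟨hM, hM.ne_univ_iff.2 hMp, fun G' hG' hG'p hMG' => ?_⟩, hGM⟩
  exact subset_antisymm hMG' (hmax ⟨hG', hG'.ne_univ_iff.1 hG'p⟩ hMG')

theorem IsUf.compl_notMem {u : Set B} (hu : IsUf u) {a : B} (ha : a ∈ u) : aᶜ ∉ u := by
  intro hac
  have hbot := hu.1.2.2 a aᶜ ha hac
  rw [inf_compl_eq_bot] at hbot
  exact hu.1.ne_univ_iff.1 hu.2.1 hbot

/-- The filter generated by `F` and `c`. -/
def adjoinLatFilter (F : Set B) (c : B) : Set B := {x | ∃ b ∈ F, b ⊓ c ≤ x}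

theorem IsLatFilter.adjoin {F : Set B} (hF : IsLatFilter F) (c : B) :
    IsLatFilter (adjoinLatFilter F c) := by
  refine ⟨?_, ?_, ?_⟩
  · obtain ⟨b, hb⟩ := hF.1
    exact ⟨b ⊓ c, b, hb, le_rfl⟩
  · rintro x y ⟨b, hb, hbx⟩ hxy
    exact ⟨b, hb, hbx.trans hxy⟩
  · rintro x y ⟨b, hb, hbx⟩ ⟨b', hb', hby⟩
    refine ⟨b ⊓ b', hF.2.2 b b' hb hb', le_inf ?_ ?_⟩
    · exact (inf_le_inf_right c inf_le_left).trans hbx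
    · exact (inf_le_inf_right c inf_le_right).trans hby

theorem subset_adjoinLatFilter (F : Set B) (c : B) : F ⊆ adjoinLatFilter F c :=
  fun b hb => ⟨b, hb, inf_le_left⟩

theorem IsLatFilter.mem_adjoinLatFilter_self {F : Set B} (hF : IsLatFilter F) (c : B) :
    c ∈ adjoinLatFilter F c :=
  let ⟨b, hb⟩ := hF.1
  ⟨b, hb, inf_le_right⟩

theorem IsLatFilter.bot_notMem_adjoinLatFilter_compl {F : Set B} (hF : IsLatFilter F) {a : B}
    (ha : a ∉ F) : ⊥ ∉ adjoinLatFilter F aᶜ := by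
  rintro ⟨b, hb, hbot⟩
  exact ha (hF.2.1 b a hb (disjoint_compl_right_iff.1 (disjoint_iff_inf_le.2 hbot)))

theorem IsLatFilter.exists_isUf_superset_notMem {F : Set B} (hF : IsLatFilter F) {a : B}
    (ha : a ∉ F) : ∃ u : Set B, IsUf u ∧ F ⊆ u ∧ a ∉ u := by
  obtain ⟨u, hu, hFu⟩ :=
    (hF.adjoin aᶜ).exists_isUf_superset (hF.bot_notMem_adjoinLatFilter_compl ha)
  exact ⟨u, hu, (subset_adjoinLatFilter F aᶜ).trans hFu,
    fun hau => hu.compl_notMem hau (hFu (hF.mem_adjoinLatFilter_self aᶜ))⟩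

theorem IsLatFilter.mem_of_iInter_stoneMap_subset {F : Set B} (hF : IsLatFilter F) {a : B}
    (hsub : (⋂ b ∈ F, stoneMap B b) ⊆ stoneMap B a) : a ∈ F := by
  by_contra ha
  obtain ⟨u, hu, hFu, hau⟩ := hF.exists_isUf_superset_notMem ha
  exact hau (hsub (Set.mem_iInter₂.2 fun b hb => hFu hb : (⟨u, hu⟩ : Uf B) ∈ _))

theorem iInter_stoneMap_Ici_subset (a : B) : (⋂ b ∈ Set.Ici a, stoneMap B b) ⊆ stoneMap B a :=
  Set.biInter_subset_of_mem (le_refl a)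

end Filters

section CanonicalExtension

variable {B₁ B₂ : Type*} [BooleanAlgebra B₁] [BooleanAlgebra B₂] (h : B₁ → B₂)

theorem mem_canExt {A : Set (Uf B₁)} {u : Uf B₂} :
    u ∈ canExt h A ↔ ∃ F, IsLatFilter F ∧ (⋂ a ∈ F, stoneMap B₁ a) ⊆ A ∧ ∀ a ∈ F, h a ∈ u.1 := by
  simp only [canExt, Set.mem_iUnion₂, Set.mem_iInter₂, exists_prop, Set.mem_ofPred_eq, and_assoc]
  rfl

theorem canExt_mono : Monotone (canExt h) := by
  intro A A' hAA' u hu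
  obtain ⟨F, hF, hsub, hu⟩ := (mem_canExt h).1 hu
  exact (mem_canExt h).2 ⟨F, hF, hsub.trans hAA', hu⟩

theorem canExt_stoneMap_subset (a : B₁) : canExt h (stoneMap B₁ a) ⊆ stoneMap B₂ (h a) := by
  intro u hu
  obtain ⟨F, hF, hsub, hu⟩ := (mem_canExt h).1 hu
  exact hu a (hF.mem_of_iInter_stoneMap_subset hsub)

theorem stoneMap_subset_canExt_stoneMap {h : B₁ → B₂} (hmono : Monotone h) (a : B₁) :
    stoneMap B₂ (h a) ⊆ canExt h (stoneMap B₁ a) := fun u hu =>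
  (mem_canExt h).2 ⟨Set.Ici a, isLatFilter_Ici a, iInter_stoneMap_Ici_subset a,
    fun _ hb => u.2.1.2.1 (h a) _ hu (hmono hb)⟩

end CanonicalExtension

/-- For an order-preserving map `h : B₁ → B₂`, the canonical extension
`h^σ : 𝒫(Uf B₁) → 𝒫(Uf B₂)` is order-preserving (monotone w.r.t. `⊆`) and extends `h`:
`h^σ (φ₁ a) = φ₂ (h a)` for all `a ∈ B₁`. -/
theorem canExt_monotone_and_extends {B₁ B₂ : Type*} [BooleanAlgebra B₁] [BooleanAlgebra B₂]
    (h : B₁ → B₂) (hmono : Monotone h) :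
    (∀ A A' : Set (Uf B₁), A ⊆ A' → canExt h A ⊆ canExt h A') ∧
    (∀ a : B₁, canExt h (stoneMap B₁ a) = stoneMap B₂ (h a)) := by
  exact ⟨fun _ _ hAA' => canExt_mono h hAA', fun a =>
    (canExt_stoneMap_subset h a).antisymm (stoneMap_subset_canExt_stoneMap hmono a)⟩
end

section
/- Let B₁ and B₂ be Boolean algebras and h : B₁ → B₂ a Boolean homomorphism, with Stone dual h_* : Uf(B₂) → Uf(B₁) given by h_*(v) = h⁻¹(v). Then for every subset A ⊆ Uf(B₁) and every ultrafilter ∇ on the set Uf(B₂): h^σ(A) ∈ ∇ if and only if A ∈ (Ultrafilter.map h_*)(∇). Equivalently, the image of h^σ(A) under the Stone map of the Boolean algebra 𝒫(Uf(B₂)) equals the preimage under h_*^β = Ultrafilter.map h_* of the image of A under the Stone map of 𝒫(Uf(B₁)); that is, h^σ = (h_*^β)^*. -/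
/-! `h^σ(A) = h_*⁻¹(A)`. A point `v` lies in the part of `h^σ(A)` indexed by `F` exactly when
`F ⊆ h⁻¹(v) = h_*(v)`, which puts `h_*(v)` into `⋂_{a ∈ F} φ₁(a) ⊆ A`; conversely, if
`h_*(v) ∈ A` then `F = h_*(v)` is admissible, since by maximality `⋂_{a ∈ h_*(v)} φ₁(a)` is
`{h_*(v)}`. -/

section

variable {B B₁ B₂ : Type*} [BooleanAlgebra B] [BooleanAlgebra B₁] [BooleanAlgebra B₂]

theorem Uf.eq_of_subset_s11 {u v : Uf B} (huv : u.1 ⊆ v.1) : u = v :=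
  Subtype.ext (u.2.2.2 v.1 v.2.1 v.2.2.1 huv)

theorem mem_iInter_stoneMap_iff {F : Set B} {v : Uf B} :
    v ∈ ⋂ a ∈ F, stoneMap B a ↔ F ⊆ v.1 :=
  Set.mem_iInter₂

theorem iInter_stoneMap_uf_eq_singleton (u : Uf B) : ⋂ a ∈ u.1, stoneMap B a = {u} := by
  ext v
  rw [mem_iInter_stoneMap_iff, Set.mem_singleton_iff]
  exact ⟨fun huv => (Uf.eq_of_subset_s11 huv).symm, fun hvu => hvu ▸ subset_rfl⟩

theorem mem_canExt_iff {h : B₁ → B₂} {A : Set (Uf B₁)} {v : Uf B₂} :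
    v ∈ canExt h A ↔
      ∃ F : Set B₁, IsLatFilter F ∧ (⋂ a ∈ F, stoneMap B₁ a) ⊆ A ∧ F ⊆ h ⁻¹' v.1 := by
  simp only [canExt, Set.mem_iUnion₂, Set.mem_ofPred_eq, exists_prop, and_assoc]
  exact exists_congr fun F => and_congr_right' <| and_congr_right' Set.mem_iInter₂

theorem canExt_eq_preimage_dual (h : B₁ → B₂) (hdual : Uf B₂ → Uf B₁)
    (hdual_spec : ∀ v : Uf B₂, (hdual v).1 = h ⁻¹' v.1) (A : Set (Uf B₁)) :
    canExt h A = hdual ⁻¹' A := by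
  ext v
  rw [mem_canExt_iff, ← hdual_spec]
  constructor
  · rintro ⟨F, -, hFA, hFv⟩
    exact hFA (mem_iInter_stoneMap_iff.mpr hFv)
  · intro hv
    refine ⟨(hdual v).1, (hdual v).2.1, ?_, subset_rfl⟩
    rwa [iInter_stoneMap_uf_eq_singleton, Set.singleton_subset_iff]

end

/-- For a Boolean homomorphism `h : B₁ → B₂` with Stone dual
`h_* : Uf B₂ → Uf B₁`, `h_* v = h⁻¹ v`: for every `A ⊆ Uf B₁` and every ultrafilter `∇` on
the set `Uf B₂`, `h^σ(A) ∈ ∇ ↔ A ∈ (Ultrafilter.map h_*) ∇`; i.e. the image of `h^σ(A)`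
under the Stone map of `𝒫(Uf B₂)` is the preimage under `h_*^β = Ultrafilter.map h_*` of the
image of `A` under the Stone map of `𝒫(Uf B₁)`: `h^σ = (h_*^β)^*`. -/
theorem canExt_eq_dual_of_stone_cech_extension {B₁ B₂ : Type*}
    [BooleanAlgebra B₁] [BooleanAlgebra B₂] (h : BoundedLatticeHom B₁ B₂)
    (hdual : Uf B₂ → Uf B₁) (hdual_spec : ∀ v : Uf B₂, (hdual v).1 = (⇑h) ⁻¹' v.1) :
    ∀ (A : Set (Uf B₁)) (U : Ultrafilter (Uf B₂)),
      canExt (⇑h) A ∈ U ↔ A ∈ Ultrafilter.map hdual U := by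
  intro A U
  rw [canExt_eq_preimage_dual h hdual hdual_spec, Ultrafilter.mem_map]
end
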